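/- The q-Bell number b_q(n) (number of direct sum decompositions of F_q^n into nonzero subspaces) equals Σ_{k=1}^{n} (1/k!) Σ_{n_1+⋯+n_k=n, n_i≥1} γ_n/(γ_{n_1}⋯γ_{n_k}). -/

import Mathlib

/-!
Over `F = 𝔽_q`, `γ_m` counts the ordered bases of an `m`-dimensional space. Fix a
composition `n = n_1 + ⋯ + n_k` with `n_i ≥ 1`. Cutting an ordered basis of `F^n` into
consecutive blocks of sizes `n_i` and spanning each block gives an ordered decomposition
`F^n = V_1 ⊕ ⋯ ⊕ V_k` with `dim V_i = n_i`, and every such decomposition arises from exactly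
`γ_{n_1} ⋯ γ_{n_k}` bases (a basis of each `V_i`). So there are `γ_n / (γ_{n_1} ⋯ γ_{n_k})` of
them. Summing over compositions counts ordered decompositions into `k` nonzero parts, and each
unordered one has exactly `k!` orderings.
-/

/-- The order of `GL_m(F_q)`. -/
def gma (q m : ℕ) : ℕ := ∏ i ∈ Finset.range m, (q ^ m - q ^ i)

/-- The `q`-Bell number: the number of direct sum decompositions of `F_q^n` into
nonzero subspaces. -/
noncomputable def qBell (n : ℕ) (F : Type) [Field F] [Fintype F] : ℕ :=
  Nat.card {D : Finset (Submodule F (Fin n → F)) //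
    (∀ V ∈ D, V ≠ ⊥) ∧
    sSupIndep (D : Set (Submodule F (Fin n → F))) ∧
    sSup (D : Set (Submodule F (Fin n → F))) = ⊤}

open Finset Module Submodule
open scoped Nat

lemma Nat.card_eq_sum_card_fiber {α β : Type*} [Finite α] (f : α → β) (B : Finset β)
    (h : ∀ a, f a ∈ B) : Nat.card α = ∑ b ∈ B, Nat.card {a // f a = b} := by
  classical
  have := Fintype.ofFinite α
  rw [Nat.card_eq_fintype_card, ← Finset.card_univ, card_eq_sum_card_fiberwise fun a _ => h a]
  refine sum_congr rfl fun b _ => ?_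
  rw [Nat.card_eq_fintype_card, Fintype.card_subtype]

lemma Nat.card_eq_card_mul_of_card_fiber {α β : Type*} [Finite α] [Finite β] (f : α → β)
    {m : ℕ} (h : ∀ b, Nat.card {a // f a = b} = m) : Nat.card α = Nat.card β * m := by
  have := Fintype.ofFinite β
  rw [Nat.card_eq_sum_card_fiber f univ fun _ => mem_univ _, sum_congr rfl fun b _ => h b,
    sum_const, Finset.card_univ, smul_eq_mul, Nat.card_eq_fintype_card]

section Lattice

variable {L ι : Type*} [CompleteLattice L]

def IsDecomposition (D : Finset L) : Prop :=
  (∀ x ∈ D, x ≠ ⊥) ∧ sSupIndep (D : Set L) ∧ sSup (D : Set L) = ⊤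

def IsOrderedDecomposition (v : ι → L) : Prop :=
  (∀ i, v i ≠ ⊥) ∧ iSupIndep v ∧ iSup v = ⊤

lemma IsOrderedDecomposition.isDecomposition_image [Fintype ι] [DecidableEq L] {v : ι → L}
    (hv : IsOrderedDecomposition v) : IsDecomposition (univ.image v) := by
  obtain ⟨hbot, hind, hsup⟩ := hv
  simp only [IsDecomposition, coe_image, coe_univ, Set.image_univ, sSup_range]
  exact ⟨by simpa using hbot, hind.sSupIndep_range, hsup⟩

lemma IsDecomposition.isOrderedDecomposition_equiv {D : Finset L} (hD : IsDecomposition D)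
    (e : ι ≃ D) : IsOrderedDecomposition fun i => (e i : L) := by
  obtain ⟨hbot, hind, hsup⟩ := hD
  refine ⟨fun i => hbot _ (e i).2, ((sSupIndep_iff _).1 hind).comp e.injective, ?_⟩
  rw [e.iSup_comp (g := fun x : D => (x : L)), ← hsup, sSup_eq_iSup']
  rfl

lemma card_isOrderedDecomposition_fin [Finite L] (k : ℕ) :
    Nat.card {v : Fin k → L // IsOrderedDecomposition v} =
      Nat.card {D : Finset L // IsDecomposition D ∧ D.card = k} * k ! := by
  classical
  let toFinset (v : {v : Fin k → L // IsOrderedDecomposition v}) :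
      {D : Finset L // IsDecomposition D ∧ D.card = k} :=
    ⟨univ.image v.1, v.2.isDecomposition_image, by
      rw [card_image_of_injective _ (v.2.2.1.injective v.2.1), card_univ, Fintype.card_fin]⟩
  refine Nat.card_eq_card_mul_of_card_fiber toFinset fun D => ?_
  have hcard : Fintype.card D.1 = k := by rw [Fintype.card_coe, D.2.2]
  let e : {v // toFinset v = D} ≃ (Fin k ≃ D.1) :=
    { toFun v := Equiv.ofBijective (fun i => ⟨v.1.1 i, by simp [← v.2, toFinset]⟩)
        ((Fintype.bijective_iff_injective_and_card _).2
          ⟨fun i j hij => v.1.2.2.1.injective v.1.2.1 (congrArg Subtype.val hij),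
            by rw [hcard, Fintype.card_fin]⟩)
      invFun e := ⟨⟨_, D.2.1.isOrderedDecomposition_equiv e⟩, Subtype.ext <| by
        ext x
        simp only [toFinset, mem_image, mem_univ, true_and]
        exact ⟨fun ⟨i, hi⟩ => hi ▸ (e i).2, fun hx => ⟨e.symm ⟨x, hx⟩, by simp⟩⟩⟩
      left_inv _ := rfl
      right_inv _ := Equiv.ext fun _ => rfl }
  rw [Nat.card_congr e, Nat.card_eq_fintype_card,
    Fintype.card_equiv (Fintype.equivOfCardEq (by rw [hcard, Fintype.card_fin])), Fintype.card_fin]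

lemma IsDecomposition.nonempty [Nontrivial L] {D : Finset L} (hD : IsDecomposition D) :
    D.Nonempty := by
  refine nonempty_iff_ne_empty.2 fun hempty => (bot_ne_top (α := L)) ?_
  rw [← hD.2.2, hempty, coe_empty, sSup_empty]

end Lattice

namespace Module.Basis

variable {R M ι : Type*} [Ring R] [AddCommGroup M] [Module R M] {κ : ι → Type*}

def blockSpan (b : Basis (Σ i, κ i) R M) (i : ι) : Submodule R M :=
  span R (Set.range fun j => b ⟨i, j⟩)

variable (b : Basis (Σ i, κ i) R M)

lemma linearIndependent_block (i : ι) : LinearIndependent R fun j => b ⟨i, j⟩ :=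
  b.linearIndependent.comp _ sigma_mk_injective

lemma blockSpan_eq_span_image (i : ι) :
    b.blockSpan i = span R (b '' (Sigma.fst ⁻¹' {i})) := by
  rw [← Set.range_sigmaMk, ← Set.range_comp]
  rfl

lemma iSupIndep_blockSpan : iSupIndep b.blockSpan := by
  refine iSupIndep_def.2 fun i => ?_
  refine Disjoint.mono (b.blockSpan_eq_span_image i).le ?_
    (b.linearIndependent.disjoint_span_image (s := Sigma.fst ⁻¹' {i}) (t := {a | a.1 ≠ i})
      (Set.disjoint_left.2 fun a ha hna => hna ha))
  refine iSup₂_le fun j hj => (b.blockSpan_eq_span_image j).trans_le (span_mono ?_)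
  exact Set.image_mono fun a (ha : a.1 = j) => show a.1 ≠ i from ha ▸ hj

lemma iSup_blockSpan : iSup b.blockSpan = ⊤ := by
  show ⨆ i, span R _ = ⊤
  rw [iSup_span, ← Set.range_sigma_eq_iUnion_range, b.span_eq]

lemma finrank_blockSpan [Nontrivial R] [StrongRankCondition R] (i : ι) [Fintype (κ i)] :
    finrank R (b.blockSpan i) = Fintype.card (κ i) :=
  finrank_span_eq_card (b.linearIndependent_block i)

end Module.Basis

namespace DirectSum.IsInternal

section Ring

variable {R M ι : Type*} [Ring R] [AddCommGroup M] [Module R M] [DecidableEq ι]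
  {κ : ι → Type*} {D : ι → Submodule R M} (h : IsInternal D)
include h

lemma blockSpan_collectedBasis (v : ∀ i, Basis (κ i) R (D i)) :
    (h.collectedBasis v).blockSpan = D := by
  funext i
  simp only [Basis.blockSpan, h.collectedBasis_coe]
  change span R (Set.range ((D i).subtype ∘ v i)) = D i
  rw [Set.range_comp, span_image, (v i).span_eq, Submodule.map_top, range_subtype]

noncomputable def blockSpanEquiv :
    {b : Basis (Σ i, κ i) R M // b.blockSpan = D} ≃ ∀ i, Basis (κ i) R (D i) where
  toFun b i :=
    (Basis.span (b.1.linearIndependent_block i)).map (LinearEquiv.ofEq _ _ (congrFun b.2 i))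
  invFun v := ⟨h.collectedBasis v, h.blockSpan_collectedBasis v⟩
  left_inv b := Subtype.ext <| Basis.eq_of_apply_eq fun ⟨i, j⟩ => by
    simp only [h.collectedBasis_coe, Basis.map_apply, Basis.span_apply]
    rfl
  right_inv v := funext fun i => Basis.eq_of_apply_eq fun j => Subtype.ext <| by
    simp only [Basis.map_apply, Basis.span_apply, h.collectedBasis_coe]
    rfl

end Ring

lemma sum_finrank {K V ι : Type*} [DivisionRing K] [AddCommGroup V] [Module K V]
    [FiniteDimensional K V] [Fintype ι] [DecidableEq ι] {D : ι → Submodule K V}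
    (h : IsInternal D) : ∑ i, finrank K (D i) = finrank K V := by
  rw [finrank_eq_card_basis (h.collectedBasis fun i => finBasis K (D i)), Fintype.card_sigma]
  simp

end DirectSum.IsInternal

lemma gma_pos {q : ℕ} (hq : 1 < q) (m : ℕ) : 0 < gma q m :=
  prod_pos fun _ hi => Nat.sub_pos_of_lt (Nat.pow_lt_pow_right hq (mem_range.1 hi))

section FiniteField

variable {K V : Type*} [DivisionRing K] [Fintype K] [AddCommGroup V] [Module K V] [Finite V]

lemma card_basis {ι : Type*} [Fintype ι] (h : Fintype.card ι = finrank K V) :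
    Nat.card (Basis ι K V) = gma (Fintype.card K) (finrank K V) := by
  let toLinearIndependent : Basis ι K V ≃ {s : ι → V // LinearIndependent K s} :=
    { toFun b := ⟨b, b.linearIndependent⟩
      invFun s := basisOfLinearIndependentOfCardEqFinrank' s.1 s.2 h
      left_inv b := Basis.eq_of_apply_eq fun _ => by simp
      right_inv s := Subtype.ext (by simp) }
  let reindex : {s : ι → V // LinearIndependent K s} ≃
      {s : Fin (finrank K V) → V // LinearIndependent K s} :=
    (Equiv.arrowCongr (Fintype.equivFinOfCardEq h) (Equiv.refl V)).subtypeEquiv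
      fun s => (linearIndependent_equiv _).symm
  rw [Nat.card_congr (toLinearIndependent.trans reindex), card_linearIndependent le_rfl, gma,
    Fin.prod_univ_eq_prod_range (fun i => _ ^ _ - _ ^ i)]

lemma card_decompositions_finrank_mul_prod_gma {ι : Type*} [Fintype ι] [DecidableEq ι]
    (c : ι → ℕ) (hc : ∑ i, c i = finrank K V) :
    Nat.card {D : ι → Submodule K V // iSupIndep D ∧ iSup D = ⊤ ∧ ∀ i, finrank K (D i) = c i} *
      ∏ i, gma (Fintype.card K) (c i) = gma (Fintype.card K) (finrank K V) := by
  have : Finite (Basis (Σ i, Fin (c i)) K V) := Finite.of_injective _ DFunLike.coe_injective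
  let blocks (b : Basis (Σ i, Fin (c i)) K V) :
      {D : ι → Submodule K V // iSupIndep D ∧ iSup D = ⊤ ∧ ∀ i, finrank K (D i) = c i} :=
    ⟨b.blockSpan, b.iSupIndep_blockSpan, b.iSup_blockSpan,
      fun i => by rw [b.finrank_blockSpan, Fintype.card_fin]⟩
  have hfiber D : Nat.card {b // blocks b = D} = ∏ i, gma (Fintype.card K) (c i) := by
    obtain ⟨D, hind, hsup, hdim⟩ := D
    have hD : DirectSum.IsInternal D :=
      (DirectSum.isInternal_submodule_iff_iSupIndep_and_iSup_eq_top D).2 ⟨hind, hsup⟩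
    rw [Nat.card_congr ((Equiv.subtypeEquivRight fun b => Subtype.ext_iff).trans
      hD.blockSpanEquiv), Nat.card_pi]
    exact prod_congr rfl fun i _ => by rw [card_basis (by simp [hdim i]), hdim i]
  rw [← card_basis (ι := Σ i, Fin (c i)) (by simp [hc]),
    Nat.card_eq_card_mul_of_card_fiber blocks hfiber]

lemma card_isOrderedDecomposition_eq_sum (k : ℕ) :
    Nat.card {v : Fin k → Submodule K V // IsOrderedDecomposition v} =
      ∑ c ∈ (Nat.antidiagonalTuple k (finrank K V)).filter (fun c => ∀ i, 0 < c i),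
        Nat.card {D : Fin k → Submodule K V //
          iSupIndep D ∧ iSup D = ⊤ ∧ ∀ i, finrank K (D i) = c i} := by
  let dims (v : {v : Fin k → Submodule K V // IsOrderedDecomposition v}) : Fin k → ℕ :=
    fun i => finrank K (v.1 i)
  have hdims v :
      dims v ∈ (Nat.antidiagonalTuple k (finrank K V)).filter (fun c => ∀ i, 0 < c i) := by
    obtain ⟨v, hbot, hind, hsup⟩ := v
    have hv : DirectSum.IsInternal v :=
      (DirectSum.isInternal_submodule_iff_iSupIndep_and_iSup_eq_top v).2 ⟨hind, hsup⟩
    exact mem_filter.2 ⟨Nat.mem_antidiagonalTuple.2 hv.sum_finrank,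
      fun i => finrank_pos_iff.2 (Submodule.nontrivial_iff_ne_bot.2 (hbot i))⟩
  rw [Nat.card_eq_sum_card_fiber dims _ hdims]
  refine sum_congr rfl fun c hc => Nat.card_congr ?_
  exact
    { toFun v := ⟨v.1.1, v.1.2.2.1, v.1.2.2.2, fun i => congrFun v.2 i⟩
      invFun D := ⟨⟨D.1,
        fun i hi => ((mem_filter.1 hc).2 i).ne' (by rw [← D.2.2.2 i, hi, finrank_bot]),
        D.2.1, D.2.2.1⟩, funext D.2.2.2⟩
      left_inv _ := rfl
      right_inv _ := rfl }

lemma IsDecomposition.card_le_finrank {D : Finset (Submodule K V)} (hD : IsDecomposition D) :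
    D.card ≤ finrank K V := by
  calc D.card = Fintype.card (D : Set (Submodule K V)) := by simp
    _ = Fintype.card {W : (D : Set (Submodule K V)) // (W : Submodule K V) ≠ ⊥} :=
      (Fintype.card_congr <|
        Equiv.subtypeUnivEquiv fun W : (D : Set (Submodule K V)) => hD.1 W.1 W.2).symm
    _ ≤ finrank K V := ((sSupIndep_iff _).1 hD.2.1).subtype_ne_bot_le_finrank

lemma card_isDecomposition_eq_sum [Nontrivial V] :
    Nat.card {D : Finset (Submodule K V) // IsDecomposition D} =
      ∑ k ∈ Icc 1 (finrank K V),
        Nat.card {D : Finset (Submodule K V) // IsDecomposition D ∧ D.card = k} := by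
  rw [Nat.card_eq_sum_card_fiber (fun D => D.1.card) _
    fun D => mem_Icc.2 ⟨D.2.nonempty.card_pos, D.2.card_le_finrank⟩]
  exact sum_congr rfl fun k _ => Nat.card_congr
    (Equiv.subtypeSubtypeEquivSubtypeInter IsDecomposition fun D => D.card = k)

end FiniteField

/-- `b_q(n) = Σ_{k=1}^n (1/k!) Σ_{n_1+⋯+n_k=n, n_i ≥ 1} γ_n/(γ_{n_1}⋯γ_{n_k})`. -/
theorem qBell_eq (q n : ℕ) (hn : 1 ≤ n)
    (F : Type) [Field F] [Fintype F] (hF : Fintype.card F = q) :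
    (qBell n F : ℚ) =
      ∑ k ∈ Finset.Icc 1 n, (1 / k.factorial : ℚ) *
        ∑ c ∈ (Finset.Nat.antidiagonalTuple k n).filter (fun c => ∀ i, 0 < c i),
          (gma q n : ℚ) / ∏ i, (gma q (c i) : ℚ) := by
  subst hF
  have : Nonempty (Fin n) := ⟨⟨0, hn⟩⟩
  have hgma m : (gma (Fintype.card F) m : ℚ) ≠ 0 :=
    Nat.cast_ne_zero.2 (gma_pos Fintype.one_lt_card m).ne'
  change (Nat.card {D : Finset (Submodule F (Fin n → F)) // IsDecomposition D} : ℚ) = _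
  rw [card_isDecomposition_eq_sum, finrank_fin_fun, Nat.cast_sum]
  refine sum_congr rfl fun k _ => ?_
  have hunordered :
      (Nat.card {D : Finset (Submodule F (Fin n → F)) // IsDecomposition D ∧ D.card = k} : ℚ) =
        1 / k ! * Nat.card {v : Fin k → Submodule F (Fin n → F) // IsOrderedDecomposition v} := by
    rw [card_isOrderedDecomposition_fin]
    push_cast
    field_simp
  have hdims c (hc : c ∈ (Nat.antidiagonalTuple k n).filter (fun c => ∀ i, 0 < c i)) :
      (Nat.card {D : Fin k → Submodule F (Fin n → F) //
        iSupIndep D ∧ iSup D = ⊤ ∧ ∀ i, finrank F (D i) = c i} : ℚ) =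
        gma (Fintype.card F) n / ∏ i, (gma (Fintype.card F) (c i) : ℚ) := by
    have hsum : ∑ i, c i = finrank F (Fin n → F) := by
      rw [finrank_fin_fun]
      exact Nat.mem_antidiagonalTuple.1 (mem_filter.1 hc).1
    rw [eq_div_iff (prod_ne_zero_iff.2 fun i _ => hgma (c i)), ← Nat.cast_prod, ← Nat.cast_mul,
      card_decompositions_finrank_mul_prod_gma c hsum, finrank_fin_fun]
  rw [hunordered, card_isOrderedDecomposition_eq_sum, finrank_fin_fun, Nat.cast_sum,
    sum_congr rfl hdims]
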